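/- arXiv:2411.11499 — 3 statements merged into one kernel-verified Lean document; each statement's English description precedes it below -/
import Mathlib

section
/- Let U be a finite set of K UEs and B a finite set of L BSs, with path-loss coefficients q_{lk} > 0 for each BS l and UE k, transmit power P > 0 and noise power N0 > 0. For every M ≥ 1: for every decomposition of the network into M+1 disjoint subnetworks (i.e., a partition of U into M+1 sets U_1,…,U_{M+1} and a partition of B into M+1 sets B_1,…,B_{M+1}), there exists a decomposition into M disjoint subnetworks (a partition of U into M sets and of B into M sets) whose sum capacity Σ_{m=1}^{M} C_sub(B_m, U_m) is at least Σ_{m=1}^{M+1} C_sub(B_m, U_m). Consequently, the maximum achievable sum capacity over decompositions into M+1 subnetworks is no larger than the maximum over decompositions into M subnetworks. -/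
/-!
Enlarging the UE set of a subnetwork only helps each of its BSs: the useful power in the
numerator grows and the interference in the denominator shrinks. Hence the sum capacity of any
decomposition is at most the capacity `Csub U q P N0 B U` of the undivided network, and for every
`M ≥ 1` this value is attained by the decomposition into `(B, U)` and `M - 1` empty subnetworks.
So both suprema equal `Csub U q P N0 B U`.
-/

open Finset

/-- Ergodic capacity of the subnetwork consisting of BSs `Bm` and UEs `Um`,
within the whole network whose UE set is `U`. -/
noncomputable def Csub {ιU ιB : Type*} [DecidableEq ιU]
    (U : Finset ιU) (q : ιB → ιU → ℝ) (P N0 : ℝ)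
    (Bm : Finset ιB) (Um : Finset ιU) : ℝ :=
  ∑ l ∈ Bm, Real.logb 2
    (1 + P * (∑ k ∈ Um, q l k ^ 2) / (N0 + P * ∑ k ∈ U \ Um, q l k ^ 2))

/-- A decomposition of the network into `M` disjoint subnetworks: a partition of the
UE set `U` into `M` pairwise disjoint sets whose union is `U`, together with a
partition of the BS set `B` into `M` pairwise disjoint sets whose union is `B`. -/
def IsDecomp {ιU ιB : Type*} [DecidableEq ιU] [DecidableEq ιB]
    (U : Finset ιU) (B : Finset ιB) {M : ℕ}
    (UF : Fin M → Finset ιU) (BF : Fin M → Finset ιB) : Prop :=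
  (∀ i j, i ≠ j → Disjoint (UF i) (UF j)) ∧ Finset.univ.biUnion UF = U ∧
    (∀ i j, i ≠ j → Disjoint (BF i) (BF j)) ∧ Finset.univ.biUnion BF = B

lemma one_add_div_le_one_add_div {P N0 S S' T T' : ℝ} (hP : 0 ≤ P) (hN0 : 0 < N0)
    (hS : S ≤ S') (hS' : 0 ≤ S') (hT : T' ≤ T) (hT' : 0 ≤ T') :
    1 + P * S / (N0 + P * T) ≤ 1 + P * S' / (N0 + P * T') := by
  gcongr

lemma biUnion_ite_eq {ι α : Type*} [Fintype ι] [DecidableEq ι] [DecidableEq α]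
    (i : ι) (s : Finset α) : univ.biUnion (fun j => if j = i then s else ∅) = s := by
  ext x
  simp [apply_ite (x ∈ ·)]

lemma disjoint_ite_of_ne {ι α : Type*} [DecidableEq ι] (i : ι) (s : Finset α) {j k : ι}
    (hjk : j ≠ k) : Disjoint (if j = i then s else ∅) (if k = i then s else ∅) := by
  split_ifs <;> simp_all

section Capacity

variable {ιU ιB : Type*} [DecidableEq ιU] {U : Finset ιU} {q : ιB → ιU → ℝ} {P N0 : ℝ}

lemma Csub_mono_right (hP : 0 ≤ P) (hN0 : 0 < N0) (Bm : Finset ιB) {Um Um' : Finset ιU}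
    (h : Um ⊆ Um') : Csub U q P N0 Bm Um ≤ Csub U q P N0 Bm Um' := by
  refine sum_le_sum fun l _ => Real.logb_le_logb_of_le one_lt_two ?_ ?_
  · positivity
  · exact one_add_div_le_one_add_div hP hN0
      (sum_le_sum_of_subset_of_nonneg h fun _ _ _ => by positivity) (by positivity)
      (sum_le_sum_of_subset_of_nonneg (sdiff_subset_sdiff subset_rfl h) fun _ _ _ => by positivity)
      (by positivity)

@[simp]
lemma Csub_empty_left (Um : Finset ιU) : Csub U q P N0 ∅ Um = 0 :=
  sum_empty

lemma sum_Csub_ite_eq {ι : Type*} [Fintype ι] [DecidableEq ι] (B : Finset ιB) (i : ι) :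
    ∑ j, Csub U q P N0 (if j = i then B else ∅) (if j = i then U else ∅) =
      Csub U q P N0 B U := by
  rw [Fintype.sum_eq_single i fun j hj => by simp [hj]]
  simp

end Capacity

section Decomposition

variable {ιU ιB : Type*} [DecidableEq ιU] [DecidableEq ιB] {U : Finset ιU} {B : Finset ιB}
  {q : ιB → ιU → ℝ} {P N0 : ℝ} {M : ℕ}

lemma IsDecomp.sum_Csub_le {UF : Fin M → Finset ιU} {BF : Fin M → Finset ιB}
    (hD : IsDecomp U B UF BF) (hP : 0 ≤ P) (hN0 : 0 < N0) :
    ∑ m, Csub U q P N0 (BF m) (UF m) ≤ Csub U q P N0 B U := by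
  obtain ⟨-, hUF, hBF, rfl⟩ := hD
  calc ∑ m, Csub U q P N0 (BF m) (UF m)
      ≤ ∑ m, Csub U q P N0 (BF m) U :=
        sum_le_sum fun m _ =>
          Csub_mono_right hP hN0 _ (hUF ▸ subset_biUnion_of_mem UF (mem_univ m))
    _ = Csub U q P N0 (univ.biUnion BF) U := (sum_biUnion fun i _ j _ hij => hBF i j hij).symm

variable (U B) in
lemma isDecomp_ite_eq (i : Fin M) :
    IsDecomp U B (fun j => if j = i then U else ∅) (fun j => if j = i then B else ∅) :=
  ⟨fun _ _ => disjoint_ite_of_ne i U, biUnion_ite_eq i U,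
    fun _ _ => disjoint_ite_of_ne i B, biUnion_ite_eq i B⟩

lemma isGreatest_sum_Csub (hP : 0 ≤ P) (hN0 : 0 < N0) (hM : 1 ≤ M) :
    IsGreatest {c : ℝ | ∃ (UF : Fin M → Finset ιU) (BF : Fin M → Finset ιB),
        IsDecomp U B UF BF ∧ c = ∑ m, Csub U q P N0 (BF m) (UF m)} (Csub U q P N0 B U) :=
  ⟨⟨_, _, isDecomp_ite_eq U B ⟨0, hM⟩, (sum_Csub_ite_eq B _).symm⟩,
    fun _ ⟨_, _, hD, hc⟩ => hc ▸ hD.sum_Csub_le hP hN0⟩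

end Decomposition

theorem sum_capacity_antitone_in_M_general {ιU ιB : Type*} [DecidableEq ιU] [DecidableEq ιB]
    (U : Finset ιU) (B : Finset ιB)
    (q : ιB → ιU → ℝ)
    (P N0 : ℝ) (hP : 0 < P) (hN0 : 0 < N0)
    (M : ℕ) (hM : 1 ≤ M) :
    (∀ (UF : Fin (M + 1) → Finset ιU) (BF : Fin (M + 1) → Finset ιB),
      IsDecomp U B UF BF →
        ∃ (UF' : Fin M → Finset ιU) (BF' : Fin M → Finset ιB),
          IsDecomp U B UF' BF' ∧
            ∑ m, Csub U q P N0 (BF m) (UF m) ≤ ∑ m, Csub U q P N0 (BF' m) (UF' m)) ∧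
    sSup {c : ℝ | ∃ (UF : Fin (M + 1) → Finset ιU) (BF : Fin (M + 1) → Finset ιB),
        IsDecomp U B UF BF ∧ c = ∑ m, Csub U q P N0 (BF m) (UF m)} ≤
      sSup {c : ℝ | ∃ (UF' : Fin M → Finset ιU) (BF' : Fin M → Finset ιB),
        IsDecomp U B UF' BF' ∧ c = ∑ m, Csub U q P N0 (BF' m) (UF' m)} := by
  refine ⟨fun UF BF hD => ⟨_, _, isDecomp_ite_eq U B ⟨0, hM⟩, ?_⟩, ?_⟩
  · rw [sum_Csub_ite_eq]
    exact hD.sum_Csub_le hP.le hN0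
  · rw [(isGreatest_sum_Csub hP.le hN0 M.succ_pos).csSup_eq,
      (isGreatest_sum_Csub hP.le hN0 hM).csSup_eq]

/-- Theorem 2: for every decomposition into `M+1` subnetworks there is a decomposition
into `M` subnetworks with at least the same sum capacity; consequently the maximum
achievable sum capacity over decompositions into `M+1` subnetworks is no larger than
the maximum over decompositions into `M` subnetworks. -/
theorem sum_capacity_antitone_in_M {ιU ιB : Type*} [DecidableEq ιU] [DecidableEq ιB]
    (U : Finset ιU) (B : Finset ιB) (K L : ℕ) (hK : U.card = K) (hL : B.card = L)
    (q : ιB → ιU → ℝ) (hq : ∀ l k, 0 < q l k)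
    (P N0 : ℝ) (hP : 0 < P) (hN0 : 0 < N0)
    (M : ℕ) (hM : 1 ≤ M) :
    (∀ (UF : Fin (M + 1) → Finset ιU) (BF : Fin (M + 1) → Finset ιB),
      IsDecomp U B UF BF →
        ∃ (UF' : Fin M → Finset ιU) (BF' : Fin M → Finset ιB),
          IsDecomp U B UF' BF' ∧
            ∑ m, Csub U q P N0 (BF m) (UF m) ≤ ∑ m, Csub U q P N0 (BF' m) (UF' m)) ∧
    sSup {c : ℝ | ∃ (UF : Fin (M + 1) → Finset ιU) (BF : Fin (M + 1) → Finset ιB),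
        IsDecomp U B UF BF ∧ c = ∑ m, Csub U q P N0 (BF m) (UF m)} ≤
      sSup {c : ℝ | ∃ (UF' : Fin M → Finset ιU) (BF' : Fin M → Finset ιB),
        IsDecomp U B UF' BF' ∧ c = ∑ m, Csub U q P N0 (BF' m) (UF' m)} :=
  sum_capacity_antitone_in_M_general U B q P N0 hP hN0 M hM
end

section
/- Let U be a finite set of UEs and B a finite set of BSs with |B| = L ≥ 1, path-loss coefficients q_{lk} > 0, transmit power P > 0 and noise power N0 > 0. Let U_1,…,U_M be a partition of U and B_1,…,B_M a partition of B. Then the sum capacity satisfies the Jensen lower bound Σ_{m=1}^{M} C_sub(B_m, U_m) ≥ Σ_{l ∈ B} log₂(a_l) − L·log₂( N0 + (P/L)·Σ_{m=1}^{M} Σ_{l ∈ B_m} Σ_{k ∈ U∖U_m} q_{lk}² ), where a_l = N0 + P·Σ_{k ∈ U} q_{lk}². -/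
open Finset

/-- Jensen's inequality for `logb 2` over a finset of positive reals. -/
lemma logb_jensen {ι : Type*} (t : Finset ι) (L : ℕ) (ht : t.card = L) (hL : 1 ≤ L)
    (D : ι → ℝ) (hD : ∀ i ∈ t, 0 < D i) :
    ∑ i ∈ t, Real.logb 2 (D i) ≤
      (L : ℝ) * Real.logb 2 ((1 / (L : ℝ)) * ∑ i ∈ t, D i) := by
  have hLpos : (0 : ℝ) < (L : ℝ) := by exact_mod_cast hL
  have hconc : ConcaveOn ℝ (Set.Ioi 0) Real.log := strictConcaveOn_log_Ioi.concaveOn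
  have key := hconc.le_map_sum (t := t) (w := fun _ => 1 / (L : ℝ)) (p := D)
    (fun i _ => by positivity)
    (by simp [Finset.sum_const, ht]; field_simp)
    (fun i hi => hD i hi)
  simp only [smul_eq_mul, ← Finset.mul_sum] at key
  have hlog2 : (0 : ℝ) < Real.log 2 := Real.log_pos (by norm_num)
  simp only [Real.logb]
  rw [← Finset.sum_div, div_le_iff₀ hlog2]
  calc ∑ i ∈ t, Real.log (D i)
      ≤ (L : ℝ) * ((1 / (L : ℝ)) * ∑ i ∈ t, Real.log (D i)) := by
        rw [← mul_assoc]; field_simp; exact le_refl _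
    _ ≤ (L : ℝ) * Real.log ((1 / (L : ℝ)) * ∑ i ∈ t, D i) := by
        exact mul_le_mul_of_nonneg_left key hLpos.le
    _ = (L : ℝ) * (Real.log ((1 / (L : ℝ)) * ∑ i ∈ t, D i) / Real.log 2) * Real.log 2 := by
        field_simp

/-- The Jensen lower bound (19) on the sum capacity, where
`a_l = N0 + P·Σ_{k∈U} q_{lk}²` and `L = |B| ≥ 1`. -/
theorem sum_capacity_jensen_lower_bound {ιU ιB : Type*} [DecidableEq ιU] [DecidableEq ιB]
    (U : Finset ιU) (B : Finset ιB) (L : ℕ) (hLcard : B.card = L) (hL : 1 ≤ L)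
    (q : ιB → ιU → ℝ) (hq : ∀ l k, 0 < q l k)
    (P N0 : ℝ) (hP : 0 < P) (hN0 : 0 < N0)
    (M : ℕ) (UF : Fin M → Finset ιU) (BF : Fin M → Finset ιB)
    (hUdisj : ∀ i j, i ≠ j → Disjoint (UF i) (UF j))
    (hUcover : Finset.univ.biUnion UF = U)
    (hBdisj : ∀ i j, i ≠ j → Disjoint (BF i) (BF j))
    (hBcover : Finset.univ.biUnion BF = B) :
    (∑ l ∈ B, Real.logb 2 (N0 + P * ∑ k ∈ U, q l k ^ 2)) -
        (L : ℝ) * Real.logb 2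
          (N0 + (P / (L : ℝ)) * ∑ m, ∑ l ∈ BF m, ∑ k ∈ U \ UF m, q l k ^ 2) ≤
      ∑ m, Csub U q P N0 (BF m) (UF m) := by
  have hLpos : (0 : ℝ) < (L : ℝ) := by exact_mod_cast hL
  -- positivity facts
  have hDpos : ∀ (m : Fin M) (l : ιB), 0 < N0 + P * ∑ k ∈ U \ UF m, q l k ^ 2 := by
    intro m l
    have : (0:ℝ) ≤ ∑ k ∈ U \ UF m, q l k ^ 2 := Finset.sum_nonneg fun k _ => sq_nonneg _
    positivity
  have hapos : ∀ l : ιB, 0 < N0 + P * ∑ k ∈ U, q l k ^ 2 := by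
    intro l
    have : (0:ℝ) ≤ ∑ k ∈ U, q l k ^ 2 := Finset.sum_nonneg fun k _ => sq_nonneg _
    positivity
  have hUsub : ∀ m : Fin M, UF m ⊆ U := by
    intro m
    rw [← hUcover]
    exact Finset.subset_biUnion_of_mem UF (Finset.mem_univ m)
  -- rewrite each Csub term as logb a_l − logb D_{m,l}
  have hCsub : ∀ m : Fin M, Csub U q P N0 (BF m) (UF m) =
      ∑ l ∈ BF m, (Real.logb 2 (N0 + P * ∑ k ∈ U, q l k ^ 2) -
        Real.logb 2 (N0 + P * ∑ k ∈ U \ UF m, q l k ^ 2)) := by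
    intro m
    unfold Csub
    refine Finset.sum_congr rfl fun l _ => ?_
    have hD := hDpos m l
    have ha := hapos l
    have hsplit : (∑ k ∈ U \ UF m, q l k ^ 2) + ∑ k ∈ UF m, q l k ^ 2
        = ∑ k ∈ U, q l k ^ 2 := Finset.sum_sdiff (hUsub m)
    have harg : 1 + P * (∑ k ∈ UF m, q l k ^ 2) /
        (N0 + P * ∑ k ∈ U \ UF m, q l k ^ 2) =
        (N0 + P * ∑ k ∈ U, q l k ^ 2) / (N0 + P * ∑ k ∈ U \ UF m, q l k ^ 2) := by
      rw [← hsplit]; field_simp; ring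
    rw [harg, Real.logb_div ha.ne' hD.ne']
  -- sigma finset
  set t : Finset ((_ : Fin M) × ιB) := Finset.univ.sigma BF with ht
  have htcard : t.card = L := by
    rw [ht, Finset.card_sigma, ← hLcard, ← hBcover]
    exact (Finset.card_biUnion fun i _ j _ h => hBdisj i j h).symm
  -- Jensen applied to D over t
  have hjensen := logb_jensen t L htcard hL
    (fun p => N0 + P * ∑ k ∈ U \ UF p.1, q p.2 k ^ 2)
    (fun p _ => hDpos p.1 p.2)
  simp only [ht, Finset.sum_sigma] at hjensen
  have havg : (1 / (L : ℝ)) * ∑ m, ∑ l ∈ BF m, (N0 + P * ∑ k ∈ U \ UF m, q l k ^ 2)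
      = N0 + (P / (L : ℝ)) * ∑ m, ∑ l ∈ BF m, ∑ k ∈ U \ UF m, q l k ^ 2 := by
    have : ∑ m, ∑ l ∈ BF m, (N0 + P * ∑ k ∈ U \ UF m, q l k ^ 2)
        = (L : ℝ) * N0 + P * ∑ m, ∑ l ∈ BF m, ∑ k ∈ U \ UF m, q l k ^ 2 := by
      simp only [Finset.sum_add_distrib, Finset.sum_const, nsmul_eq_mul, ← Finset.mul_sum, ← Finset.sum_mul]
      have : ∑ m : Fin M, ((BF m).card : ℝ) = (L : ℝ) := by
        rw [← Nat.cast_sum]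
        norm_cast
        rw [← hLcard, ← hBcover]
        exact (Finset.card_biUnion fun i _ j _ h => hBdisj i j h).symm
      rw [this]
    rw [this]; field_simp
  rw [havg] at hjensen
  -- first double sum equals sum over B
  have hfirst : ∑ m, ∑ l ∈ BF m, Real.logb 2 (N0 + P * ∑ k ∈ U, q l k ^ 2)
      = ∑ l ∈ B, Real.logb 2 (N0 + P * ∑ k ∈ U, q l k ^ 2) := by
    rw [← hBcover]
    exact (Finset.sum_biUnion fun i _ j _ h => hBdisj i j h).symm
  calc (∑ l ∈ B, Real.logb 2 (N0 + P * ∑ k ∈ U, q l k ^ 2)) -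
        (L : ℝ) * Real.logb 2
          (N0 + (P / (L : ℝ)) * ∑ m, ∑ l ∈ BF m, ∑ k ∈ U \ UF m, q l k ^ 2)
      ≤ (∑ l ∈ B, Real.logb 2 (N0 + P * ∑ k ∈ U, q l k ^ 2)) -
        ∑ m, ∑ l ∈ BF m, Real.logb 2 (N0 + P * ∑ k ∈ U \ UF m, q l k ^ 2) :=
        sub_le_sub_left hjensen _
    _ = ∑ m, Csub U q P N0 (BF m) (UF m) := by
        rw [← hfirst]
        simp only [hCsub, Finset.sum_sub_distrib]
end

section
/- Let U be a finite set of UEs and B a finite set of BSs, with path-loss coefficients q_{lk} > 0, transmit power P > 0 and noise power N0 > 0. Let U_1,…,U_{M+1} be a partition of U and B_1,…,B_{M+1} a partition of B. Define the merged decomposition into M subnetworks by (B_m, U_m) for m = 1,…,M−1 together with (B_M ∪ B_{M+1}, U_M ∪ U_{M+1}). Then the merged decomposition partitions U into M sets and B into M sets, and its sum capacity satisfies Σ_{m=1}^{M−1} C_sub(B_m, U_m) + C_sub(B_M ∪ B_{M+1}, U_M ∪ U_{M+1}) ≥ Σ_{m=1}^{M+1} C_sub(B_m, U_m). -/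
open Finset

lemma Csub_mono {ιU ιB : Type*} [DecidableEq ιU]
    (U : Finset ιU) (q : ιB → ιU → ℝ) (P N0 : ℝ) (hP : 0 < P) (hN0 : 0 < N0)
    (Bm : Finset ιB) {Um Um' : Finset ιU} (h : Um ⊆ Um') :
    Csub U q P N0 Bm Um ≤ Csub U q P N0 Bm Um' := by
  unfold Csub
  apply Finset.sum_le_sum
  intro l _
  have hden' : 0 < N0 + P * ∑ k ∈ U \ Um', q l k ^ 2 := by positivity
  apply Real.logb_le_logb_of_le one_lt_two
  · positivity
  · gcongr <;> first
      | positivity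
      | exact fun k _ => by positivity
      | exact Finset.sdiff_subset_sdiff (subset_refl U) h
      | exact Finset.sum_le_sum_of_subset_of_nonneg h (fun k _ _ => by positivity)

lemma Csub_union_left {ιU ιB : Type*} [DecidableEq ιU] [DecidableEq ιB]
    (U : Finset ιU) (q : ιB → ιU → ℝ) (P N0 : ℝ)
    {B1 B2 : Finset ιB} (h : Disjoint B1 B2) (Um : Finset ιU) :
    Csub U q P N0 (B1 ∪ B2) Um = Csub U q P N0 B1 Um + Csub U q P N0 B2 Um :=
  Finset.sum_union h

lemma merge_partition {α : Type*} [DecidableEq α] {M : ℕ} (hM : 1 ≤ M)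
    (F : Fin (M + 1) → Finset α) (S : Finset α)
    (hdisj : ∀ i j, i ≠ j → Disjoint (F i) (F j))
    (hcov : Finset.univ.biUnion F = S) :
    (∀ i j : Fin M, i ≠ j → Disjoint
      (if i.val = M - 1 then F i.castSucc ∪ F (Fin.last M) else F i.castSucc)
      (if j.val = M - 1 then F j.castSucc ∪ F (Fin.last M) else F j.castSucc)) ∧
    Finset.univ.biUnion (fun m : Fin M =>
      if m.val = M - 1 then F m.castSucc ∪ F (Fin.last M) else F m.castSucc) = S := by
  have hcs : ∀ i j : Fin M, i ≠ j → (i.castSucc : Fin (M + 1)) ≠ j.castSucc := by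
    intro i j hij h
    exact hij (Fin.castSucc_injective M h)
  have hlast : ∀ j : Fin M, (Fin.last M : Fin (M + 1)) ≠ j.castSucc := by
    intro j h
    have := congrArg Fin.val h
    simp [Fin.last] at this
    omega
  constructor
  · intro i j hij
    by_cases hi : i.val = M - 1 <;> by_cases hj : j.val = M - 1
    · exact absurd (Fin.ext (hi.trans hj.symm)) hij
    · simp only [hi, hj, if_true, if_false, Finset.disjoint_union_left]
      exact ⟨hdisj _ _ (hcs i j hij), hdisj _ _ (hlast j)⟩
    · simp only [hi, hj, if_true, if_false, Finset.disjoint_union_right]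
      exact ⟨hdisj _ _ (hcs i j hij), hdisj _ _ (hlast i).symm⟩
    · simp only [hi, hj, if_false]
      exact hdisj _ _ (hcs i j hij)
  · rw [← hcov]
    ext x
    simp only [Finset.mem_biUnion, Finset.mem_univ, true_and]
    constructor
    · rintro ⟨m, hm⟩
      by_cases hms : m.val = M - 1
      · rw [if_pos hms] at hm
        rcases Finset.mem_union.mp hm with h | h
        exacts [⟨m.castSucc, h⟩, ⟨Fin.last M, h⟩]
      · rw [if_neg hms] at hm
        exact ⟨m.castSucc, hm⟩
    · rintro ⟨j, hj⟩
      rcases Fin.eq_castSucc_or_eq_last j with ⟨m, rfl⟩ | rfl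
      · refine ⟨m, ?_⟩
        by_cases hms : m.val = M - 1
        · rw [if_pos hms]; exact Finset.mem_union_left _ hj
        · rw [if_neg hms]; exact hj
      · refine ⟨⟨M - 1, by omega⟩, ?_⟩
        rw [if_pos rfl]
        have : (Fin.castSucc (⟨M - 1, by omega⟩ : Fin M)) = (⟨M - 1, by omega⟩ : Fin (M+1)) := rfl
        exact Finset.mem_union_right _ hj

/-- The merging step (47): merging the last two subnetworks of a decomposition into
`M+1` subnetworks yields a decomposition into `M` subnetworks whose sum capacity is
at least the original one. (Subnetworks are indexed by `Fin (M+1) = {0,…,M}`; the merged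
family keeps subnetworks `0,…,M−2` and merges subnetworks `M−1` and `M`.) -/
theorem merge_last_two_subnetworks {ιU ιB : Type*} [DecidableEq ιU] [DecidableEq ιB]
    (U : Finset ιU) (B : Finset ιB) (q : ιB → ιU → ℝ) (hq : ∀ l k, 0 < q l k)
    (P N0 : ℝ) (hP : 0 < P) (hN0 : 0 < N0)
    (M : ℕ) (hM : 1 ≤ M)
    (UF : Fin (M + 1) → Finset ιU) (BF : Fin (M + 1) → Finset ιB)
    (hUdisj : ∀ i j, i ≠ j → Disjoint (UF i) (UF j))
    (hUcover : Finset.univ.biUnion UF = U)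
    (hBdisj : ∀ i j, i ≠ j → Disjoint (BF i) (BF j))
    (hBcover : Finset.univ.biUnion BF = B)
    (UF' : Fin M → Finset ιU) (BF' : Fin M → Finset ιB)
    (hUF' : UF' = fun m : Fin M =>
      if m.val = M - 1 then UF m.castSucc ∪ UF (Fin.last M) else UF m.castSucc)
    (hBF' : BF' = fun m : Fin M =>
      if m.val = M - 1 then BF m.castSucc ∪ BF (Fin.last M) else BF m.castSucc) :
    (∀ i j, i ≠ j → Disjoint (UF' i) (UF' j)) ∧
    Finset.univ.biUnion UF' = U ∧
    (∀ i j, i ≠ j → Disjoint (BF' i) (BF' j)) ∧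
    Finset.univ.biUnion BF' = B ∧
    ∑ m, Csub U q P N0 (BF m) (UF m) ≤ ∑ m, Csub U q P N0 (BF' m) (UF' m) := by
  subst hUF' hBF'
  obtain ⟨hU1, hU2⟩ := merge_partition hM UF U hUdisj hUcover
  obtain ⟨hB1, hB2⟩ := merge_partition hM BF B hBdisj hBcover
  refine ⟨hU1, hU2, hB1, hB2, ?_⟩
  set f : Fin (M + 1) → ℝ := fun m => Csub U q P N0 (BF m) (UF m) with hf
  set g : Fin M → ℝ := fun m => Csub U q P N0
      (if m.val = M - 1 then BF m.castSucc ∪ BF (Fin.last M) else BF m.castSucc)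
      (if m.val = M - 1 then UF m.castSucc ∪ UF (Fin.last M) else UF m.castSucc) with hg
  show ∑ m, f m ≤ ∑ m, g m
  set i0 : Fin M := ⟨M - 1, by omega⟩ with hi0
  have hgm : ∀ m : Fin M, m ≠ i0 → g m = f m.castSucc := by
    intro m hm
    have : m.val ≠ M - 1 := fun h => hm (Fin.ext h)
    simp [hg, hf, this]
  have hcsne : i0.castSucc ≠ Fin.last M := by
    intro h
    have := congrArg Fin.val h
    simp [Fin.last, hi0] at this
    omega
  have hkey : f i0.castSucc + f (Fin.last M) ≤ g i0 := by
    have hBd : Disjoint (BF i0.castSucc) (BF (Fin.last M)) := hBdisj _ _ hcsne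
    have hgi0 : g i0 = Csub U q P N0 (BF i0.castSucc) (UF i0.castSucc ∪ UF (Fin.last M))
        + Csub U q P N0 (BF (Fin.last M)) (UF i0.castSucc ∪ UF (Fin.last M)) := by
      simp only [hg, hi0, if_pos rfl]
      exact Csub_union_left U q P N0 hBd _
    rw [hgi0]
    exact add_le_add
      (Csub_mono U q P N0 hP hN0 _ Finset.subset_union_left)
      (Csub_mono U q P N0 hP hN0 _ Finset.subset_union_right)
  calc ∑ m, f m = (∑ m : Fin M, f m.castSucc) + f (Fin.last M) := Fin.sum_univ_castSucc f
    _ = ((∑ m ∈ Finset.univ.erase i0, f m.castSucc) + f i0.castSucc) + f (Fin.last M) := by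
        rw [Finset.sum_erase_add _ _ (Finset.mem_univ i0)]
    _ = (∑ m ∈ Finset.univ.erase i0, f m.castSucc) + (f i0.castSucc + f (Fin.last M)) := by ring
    _ ≤ (∑ m ∈ Finset.univ.erase i0, g m) + g i0 := by
        apply add_le_add _ hkey
        apply le_of_eq
        apply Finset.sum_congr rfl
        intro m hm
        exact (hgm m (Finset.mem_erase.mp hm).1).symm
    _ = ∑ m, g m := Finset.sum_erase_add _ _ (Finset.mem_univ i0)
end
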